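/- Work in the ring of formal power series in three variables x, y, z over ℤ. Let P(x,y,z) be the series whose coefficient of x^k y^m z^n is p_{n,m,k}; let P_0(x,z) be the series whose coefficient of x^k y^m z^n is p_{n,0,k} if m = 0 and 0 otherwise; and let W(x,y,z) (representing V_0(x,yz)) be the series whose coefficient of x^k y^m z^n is v_{n,0,k} if m = n and 0 otherwise. Then P(x,y,z) = W(x,y,z)·(1 + z·(x + P_0(x,z) − 1)·P(x,y,z)). -/

import Mathlib

/-!
A path that is not everywhere at or below the axis factors uniquely as `w U a D r`: `U` is its
first step from height `0` to `1`, `D` its first return to `0` after it. Here `w` is a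
nonpositive Dyck path, `a` a nonnegative one and `r` arbitrary. All up steps of `w` are flaws,
`a` has none, and the arch `U a D` has the peaks of `a`, or a single one if `a` is empty. In
generating functions this reads `P = W + W z (x + P₀ - 1) P`, where reflection identifies the
series `W` of nonpositive paths with `V₀(x, yz)`.
-/

/-- The height of a path (list of steps; `true` = up step `U`, `false` = down step `D`)
after all its steps: #U − #D. -/
def height (l : List Bool) : ℤ := (l.count true : ℤ) - (l.count false : ℤ)

/-- `l` is a Dyck path of semilength `n`: `2n` steps ending at height `0`
(equivalently, exactly `n` up steps). It may go below the x-axis. -/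
def IsDyck (n : ℕ) (l : List Bool) : Prop := l.length = 2 * n ∧ l.count true = n

/-- The number of flaws: up steps starting at negative height. -/
def flaws (l : List Bool) : ℕ :=
  ((Finset.range l.length).filter
    (fun i => l.getD i false = true ∧ height (l.take i) < 0)).card

/-- The number of peaks: positions where an up step is immediately followed by a down step. -/
def peaks (l : List Bool) : ℕ :=
  ((Finset.range (l.length - 1)).filter
    (fun i => l.getD i false = true ∧ l.getD (i + 1) false = false)).card

/-- The number of valleys: positions where a down step is immediately followed by an up step. -/
def valleys (l : List Bool) : ℕ :=
  ((Finset.range (l.length - 1)).filter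
    (fun i => l.getD i false = false ∧ l.getD (i + 1) false = true)).card

/-- The number of double ascents: positions of two consecutive up steps. -/
def dascents (l : List Bool) : ℕ :=
  ((Finset.range (l.length - 1)).filter
    (fun i => l.getD i false = true ∧ l.getD (i + 1) false = true)).card

/-- The number of double descents: positions of two consecutive down steps. -/
def ddescents (l : List Bool) : ℕ :=
  ((Finset.range (l.length - 1)).filter
    (fun i => l.getD i false = false ∧ l.getD (i + 1) false = false)).card

/-- `p n m k`: the number of Dyck paths of semilength `n` with `m` flaws and `k` peaks. -/
noncomputable def p (n m k : ℕ) : ℕ :=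
  Nat.card {l : List Bool // IsDyck n l ∧ flaws l = m ∧ peaks l = k}

/-- `v n m k`: the number of Dyck paths of semilength `n` with `m` flaws and `k` valleys. -/
noncomputable def v (n m k : ℕ) : ℕ :=
  Nat.card {l : List Bool // IsDyck n l ∧ flaws l = m ∧ valleys l = k}

/-- `a n m k`: the number of Dyck paths of semilength `n` with `m` flaws and `k` double ascents. -/
noncomputable def a (n m k : ℕ) : ℕ :=
  Nat.card {l : List Bool // IsDyck n l ∧ flaws l = m ∧ dascents l = k}

/-- `d n m k`: the number of Dyck paths of semilength `n` with `m` flaws and `k` double descents. -/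
noncomputable def d (n m k : ℕ) : ℕ :=
  Nat.card {l : List Bool // IsDyck n l ∧ flaws l = m ∧ ddescents l = k}

open MvPowerSeries

/-- Coefficient of `x^k y^m z^n` in a three-variable power series
(`x` = `X 0`, `y` = `X 1`, `z` = `X 2`). -/
noncomputable def coeff3 (F : MvPowerSeries (Fin 3) ℤ) (k m n : ℕ) : ℤ :=
  MvPowerSeries.coeff (R := ℤ)
    (Finsupp.single (0 : Fin 3) k + Finsupp.single (1 : Fin 3) m +
      Finsupp.single (2 : Fin 3) n) F

namespace List

variable {α : Type*}

theorem exists_append_cons_minimal {Q : List α → Prop} (hnil : ¬Q []) :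
    ∀ {l : List α} {n : ℕ}, Q (l.take n) →
      ∃ w b s, l = w ++ b :: s ∧ Q (w ++ [b]) ∧ ∀ i, ¬Q (w.take i) := by
  intro l
  induction l generalizing Q with
  | nil => intro n h; simp_all
  | cons c t ih =>
    intro n hn
    by_cases hc : Q [c]
    · exact ⟨[], c, t, rfl, hc, by simpa using hnil⟩
    · obtain _ | n := n
      · exact absurd hn hnil
      obtain ⟨w, b, s, rfl, hQ, hmin⟩ := ih (Q := fun u => Q (c :: u)) hc hn
      refine ⟨c :: w, b, s, rfl, hQ, ?_⟩
      rintro (_ | i)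
      · simpa using hnil
      · exact hmin i

theorem eq_of_append_cons_eq_of_minimal {Q : List α → Prop} {w₁ w₂ s₁ s₂ : List α}
    {b : α} (h₁ : Q (w₁ ++ [b])) (h₂ : Q (w₂ ++ [b]))
    (hmin₁ : ∀ i, ¬Q (w₁.take i)) (hmin₂ : ∀ i, ¬Q (w₂.take i))
    (h : w₁ ++ b :: s₁ = w₂ ++ b :: s₂) : w₁ = w₂ ∧ s₁ = s₂ := by
  have not_shorter : ∀ {u v t t' : List α}, Q (u ++ [b]) → (∀ i, ¬Q (v.take i)) →
      u ++ b :: t = v ++ b :: t' → ¬u.length < v.length := by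
    intro u v t t' hu hv huv hlt
    apply hv (u.length + 1)
    have := congrArg (List.take (u.length + 1)) huv
    rw [List.take_append_of_le_length hlt] at this
    rw [← this]
    simpa [List.take_append, List.take_of_length_le] using hu
  have hlen : w₁.length = w₂.length := by
    have := not_shorter h₁ hmin₂ h
    have := not_shorter h₂ hmin₁ h.symm
    omega
  obtain ⟨rfl, hs⟩ := List.append_inj h hlen
  exact ⟨rfl, List.cons_injective hs⟩

end List

@[simp] theorem height_nil : height [] = 0 := rfl

@[simp] theorem height_cons_true (l : List Bool) : height (true :: l) = height l + 1 := by
  simp [height, sub_add_eq_add_sub]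

@[simp] theorem height_cons_false (l : List Bool) : height (false :: l) = height l - 1 := by
  simp [height, sub_sub]

@[simp] theorem height_append (l₁ l₂ : List Bool) :
    height (l₁ ++ l₂) = height l₁ + height l₂ := by
  simp only [height, List.count_append, Nat.cast_add]
  ring

theorem count_true_map_not (l : List Bool) : (l.map not).count true = l.count false :=
  l.count_map_of_injective not Bool.not_injective false

theorem count_false_map_not (l : List Bool) : (l.map not).count false = l.count true :=
  l.count_map_of_injective not Bool.not_injective true

theorem height_map_not (l : List Bool) : height (l.map not) = -height l := by
  rw [height, height, count_true_map_not, count_false_map_not]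
  ring

theorem count_false_eq_count_true {l : List Bool} (h : height l = 0) :
    l.count false = l.count true := by
  unfold height at h
  omega

theorem length_eq_two_mul_count {l : List Bool} (h : height l = 0) :
    l.length = 2 * l.count true := by
  have := l.count_true_add_count_false
  have := count_false_eq_count_true h
  omega

theorem isDyck_iff {n : ℕ} {l : List Bool} :
    IsDyck n l ↔ height l = 0 ∧ l.count true = n := by
  have := l.count_true_add_count_false
  unfold IsDyck height
  omega

def StaysNonneg (l : List Bool) : Prop := ∀ i, 0 ≤ height (l.take i)

def StaysNonpos (l : List Bool) : Prop := ∀ i, height (l.take i) ≤ 0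

theorem staysNonneg_map_not {l : List Bool} : StaysNonneg (l.map not) ↔ StaysNonpos l := by
  simp only [StaysNonneg, StaysNonpos, ← List.map_take, height_map_not, neg_nonneg]

theorem exists_first_ascent {l : List Bool} (hl : ¬StaysNonpos l) :
    ∃ w s, l = w ++ true :: s ∧ height w = 0 ∧ StaysNonpos w := by
  simp only [StaysNonpos, not_forall, not_le] at hl
  obtain ⟨n, hn⟩ := hl
  obtain ⟨w, b, s, rfl, hb, hw⟩ :=
    List.exists_append_cons_minimal (Q := fun u => 0 < height u) (by simp) hn
  have hw0 : height w ≤ 0 := not_lt.1 (by simpa using hw w.length)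
  cases b
  · rw [height_append, height_cons_false, height_nil] at hb
    omega
  · rw [height_append, height_cons_true, height_nil] at hb
    exact ⟨w, s, rfl, by omega, fun i => not_lt.1 (hw i)⟩

theorem exists_first_descent {l : List Bool} (hl : ¬StaysNonneg l) :
    ∃ a r, l = a ++ false :: r ∧ height a = 0 ∧ StaysNonneg a := by
  simp only [StaysNonneg, not_forall, not_le] at hl
  obtain ⟨n, hn⟩ := hl
  obtain ⟨a, b, r, rfl, hb, ha⟩ :=
    List.exists_append_cons_minimal (Q := fun u => height u < 0) (by simp) hn
  have ha0 : 0 ≤ height a := not_lt.1 (by simpa using ha a.length)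
  cases b
  · rw [height_append, height_cons_false, height_nil] at hb
    exact ⟨a, r, rfl, by omega, fun i => not_lt.1 (ha i)⟩
  · rw [height_append, height_cons_true, height_nil] at hb
    omega

theorem peaks_cons (b : Bool) (l : List Bool) :
    peaks (b :: l) = (if b = true ∧ l.head? = some false then 1 else 0) + peaks l := by
  cases l with
  | nil => simp [peaks]
  | cons c l =>
    unfold peaks
    rw [Finset.card_filter, Finset.card_filter, show (b :: c :: l).length - 1 =
      ((c :: l).length - 1) + 1 by simp, Finset.sum_range_succ', add_comm]
    simp

theorem peaks_append (l₁ l₂ : List Bool) :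
    peaks (l₁ ++ l₂) = peaks l₁ + peaks l₂ +
      if l₁.getLast? = some true ∧ l₂.head? = some false then 1 else 0 := by
  induction l₁ with
  | nil => simp [peaks]
  | cons b l ih =>
    rw [List.cons_append, peaks_cons, ih, peaks_cons]
    cases l with
    | nil => simp [peaks, add_comm]
    | cons c l =>
      simp only [List.cons_append, List.head?_cons, List.getLast?_cons_cons, Option.some.injEq]
      omega

theorem valleys_map_not (l : List Bool) : valleys (l.map not) = peaks l := by
  unfold valleys peaks
  rw [List.length_map]
  congr 1
  refine Finset.filter_congr fun i hi => ?_
  rw [Finset.mem_range] at hi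
  simp [List.getElem?_eq_getElem (show i < l.length by omega),
    List.getElem?_eq_getElem (show i + 1 < l.length by omega)]

theorem card_filter_getD_eq_count (l : List Bool) :
    ((Finset.range l.length).filter (fun i => l.getD i false = true)).card = l.count true := by
  induction l with
  | nil => rfl
  | cons b l ih =>
    rw [Finset.card_filter] at ih ⊢
    rw [List.length_cons, Finset.sum_range_succ', List.count_cons]
    simp only [List.getD_cons_succ, List.getD_cons_zero, ih]
    cases b <;> simp

theorem flaws_append {l₁ : List Bool} (h : height l₁ = 0) (l₂ : List Bool) :
    flaws (l₁ ++ l₂) = flaws l₁ + flaws l₂ := by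
  unfold flaws
  rw [Finset.card_filter, Finset.card_filter, Finset.card_filter, List.length_append,
    Finset.sum_range_add]
  congr 1
  · refine Finset.sum_congr rfl fun i hi => ?_
    rw [Finset.mem_range] at hi
    rw [List.getD_append _ _ _ _ hi, List.take_append_of_le_length hi.le]
  · refine Finset.sum_congr rfl fun i _ => ?_
    rw [List.getD_append_right _ _ _ _ (by omega), List.take_append]
    simp [h, List.take_of_length_le]

theorem flaws_pos_of_append_cons_true {l₁ : List Bool} (h : height l₁ < 0) (l₂ : List Bool) :
    0 < flaws (l₁ ++ true :: l₂) :=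
  Finset.card_pos.2 ⟨l₁.length, by simp [h]⟩

theorem flaws_eq_zero_of_staysNonneg {l : List Bool} (h : StaysNonneg l) : flaws l = 0 :=
  Finset.card_eq_zero.2 <| Finset.filter_eq_empty_iff.2 fun i _ hi => (h i).not_gt hi.2

/-- Between a first descent below the axis and the return to height `0`, some up step
starts at height `-1`. -/
theorem staysNonneg_of_flaws_eq_zero {l : List Bool} (h : height l = 0) (hf : flaws l = 0) :
    StaysNonneg l := by
  by_contra hl
  obtain ⟨a, s, rfl, ha, -⟩ := exists_first_descent hl
  have hs1 : height s = 1 := by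
    rw [height_append, height_cons_false, ha] at h
    omega
  have hs : ¬StaysNonpos s := fun hs => by simpa [hs1] using hs s.length
  obtain ⟨u, t, rfl, hu, -⟩ := exists_first_ascent hs
  have := flaws_pos_of_append_cons_true (l₁ := a ++ false :: u) (by simp [ha, hu]) t
  rw [List.append_assoc, List.cons_append] at this
  omega

theorem flaws_eq_count_of_staysNonpos {l : List Bool} (h : StaysNonpos l) :
    flaws l = l.count true := by
  rw [← card_filter_getD_eq_count, flaws]
  congr 1
  refine Finset.filter_congr fun i hi => and_iff_left_of_imp fun hup => ?_
  have hi : i < l.length := Finset.mem_range.1 hi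
  have := h (i + 1)
  rw [List.getD_eq_getElem _ _ hi] at hup
  rw [List.take_add_one, List.getElem?_eq_getElem hi, hup, Option.toList_some, height_append,
    height_cons_true, height_nil] at this
  omega

section GenFun

open Finset.HasAntidiagonal

variable {σ R α β : Type*} [Semiring R]

def FiniteFibers {M : Type*} (wt : α → M) : Prop := ∀ e, Finite {x // wt x = e}

noncomputable def genFun (wt : α → σ →₀ ℕ) : MvPowerSeries σ R :=
  fun e => Nat.card {x // wt x = e}

theorem coeff_genFun (wt : α → σ →₀ ℕ) (e : σ →₀ ℕ) :
    coeff e (genFun wt : MvPowerSeries σ R) = Nat.card {x // wt x = e} := rfl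

theorem genFun_comp_equiv (e : α ≃ β) (wt : β → σ →₀ ℕ) :
    (genFun (wt ∘ e) : MvPowerSeries σ R) = genFun wt := by
  ext d
  simp only [coeff_genFun]
  exact congrArg _ (Nat.card_congr (e.subtypeEquiv fun _ => Iff.rfl))

theorem genFun_const [DecidableEq σ] (c : σ →₀ ℕ) :
    (genFun (fun _ : Unit => c) : MvPowerSeries σ R) = monomial c 1 := by
  ext d
  rw [coeff_genFun, coeff_monomial]
  by_cases h : d = c
  · subst h
    simp
  · simp [h, Ne.symm h]

theorem genFun_sum {wa : α → σ →₀ ℕ} {wb : β → σ →₀ ℕ}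
    (ha : FiniteFibers wa) (hb : FiniteFibers wb) :
    (genFun (Sum.elim wa wb) : MvPowerSeries σ R) = genFun wa + genFun wb := by
  ext d
  have : Finite {a // Sum.elim wa wb (.inl a) = d} := ha d
  have : Finite {b // Sum.elim wa wb (.inr b) = d} := hb d
  rw [coeff_genFun, map_add, coeff_genFun, coeff_genFun, Nat.card_congr Equiv.subtypeSum,
    Nat.card_sum, Nat.cast_add]
  rfl

variable [DecidableEq σ]

theorem genFun_eq_genFun_ne_add [DecidableEq α] {wt : α → σ →₀ ℕ} (h : FiniteFibers wt)
    (x₀ : α) : (genFun wt : MvPowerSeries σ R) =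
      genFun (fun x : {x // x ≠ x₀} => wt x) + monomial (wt x₀) 1 := by
  have hne : FiniteFibers fun x : {x // x ≠ x₀} => wt x := fun e =>
    have := h e
    Finite.of_injective
      (fun y : {y : {x // x ≠ x₀} // wt y = e} => (⟨y.1.1, y.2⟩ : {x // wt x = e}))
      fun _ _ hy => Subtype.ext (Subtype.ext (Subtype.mk.inj hy))
  rw [← genFun_comp_equiv ((Equiv.optionEquivSumPUnit _).symm.trans (Equiv.optionSubtypeNe x₀)),
    ← genFun_const, ← genFun_sum hne fun _ => inferInstance]
  congr 1
  funext y
  rcases y with y | _ <;> rfl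

def fiberProdEquiv (wa : α → σ →₀ ℕ) (wb : β → σ →₀ ℕ) (e : σ →₀ ℕ) :
    {x : α × β // wa x.1 + wb x.2 = e} ≃
      Σ ij : antidiagonal e, {a // wa a = ij.1.1} × {b // wb b = ij.1.2} where
  toFun x :=
    ⟨⟨(wa x.1.1, wb x.1.2), mem_antidiagonal.2 x.2⟩, ⟨x.1.1, rfl⟩, ⟨x.1.2, rfl⟩⟩
  invFun y := ⟨(y.2.1, y.2.2), by rw [y.2.1.2, y.2.2.2]; exact mem_antidiagonal.1 y.1.2⟩
  left_inv _ := rfl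
  right_inv := by
    rintro ⟨⟨⟨i, j⟩, h⟩, ⟨a, ha⟩, ⟨b, hb⟩⟩
    dsimp only at ha hb
    subst ha hb
    rfl

theorem FiniteFibers.prod {wa : α → σ →₀ ℕ} {wb : β → σ →₀ ℕ}
    (ha : FiniteFibers wa) (hb : FiniteFibers wb) :
    FiniteFibers (fun x : α × β => wa x.1 + wb x.2) := fun e =>
  have : ∀ i, Finite {a // wa a = i} := ha
  have : ∀ j, Finite {b // wb b = j} := hb
  Finite.of_equiv _ (fiberProdEquiv wa wb e).symm

theorem genFun_prod {wa : α → σ →₀ ℕ} {wb : β → σ →₀ ℕ}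
    (ha : FiniteFibers wa) (hb : FiniteFibers wb) :
    (genFun (fun x : α × β => wa x.1 + wb x.2) : MvPowerSeries σ R) =
      genFun wa * genFun wb := by
  ext e
  have : ∀ i, Finite {a // wa a = i} := ha
  have : ∀ j, Finite {b // wb b = j} := hb
  rw [coeff_genFun, Nat.card_congr (fiberProdEquiv wa wb e), Nat.card_sigma, coeff_mul]
  simp only [coeff_genFun, Nat.card_prod, Nat.cast_sum, Nat.cast_mul]
  exact Finset.sum_coe_sort (antidiagonal e) fun p =>
    (Nat.card {a // wa a = p.1} : R) * Nat.card {b // wb b = p.2}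

theorem genFun_const_add {wt : α → σ →₀ ℕ} (h : FiniteFibers wt) (c : σ →₀ ℕ) :
    (genFun (fun x => c + wt x) : MvPowerSeries σ R) = monomial c 1 * genFun wt := by
  rw [← genFun_const, ← genFun_prod (fun _ => inferInstance) h]
  exact (genFun_comp_equiv (Equiv.punitProd α) _).symm

end GenFun

noncomputable def exp3 (k m n : ℕ) : Fin 3 →₀ ℕ :=
  Finsupp.single 0 k + Finsupp.single 1 m + Finsupp.single 2 n

@[simp] theorem exp3_apply_zero (k m n : ℕ) : exp3 k m n 0 = k := by simp [exp3]
@[simp] theorem exp3_apply_one (k m n : ℕ) : exp3 k m n 1 = m := by simp [exp3]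
@[simp] theorem exp3_apply_two (k m n : ℕ) : exp3 k m n 2 = n := by simp [exp3]

theorem exp3_add (k m n k' m' n' : ℕ) :
    exp3 k m n + exp3 k' m' n' = exp3 (k + k') (m + m') (n + n') := by
  ext i; fin_cases i <;> simp

theorem exp3_eq_exp3_iff {k m n k' m' n' : ℕ} :
    exp3 k m n = exp3 k' m' n' ↔ k = k' ∧ m = m' ∧ n = n' := by
  refine ⟨fun h => ?_, by rintro ⟨rfl, rfl, rfl⟩; rfl⟩
  exact ⟨by simpa using DFunLike.congr_fun h 0, by simpa using DFunLike.congr_fun h 1,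
    by simpa using DFunLike.congr_fun h 2⟩

theorem ext_coeff3 {F G : MvPowerSeries (Fin 3) ℤ}
    (h : ∀ k m n, coeff3 F k m n = coeff3 G k m n) : F = G := by
  ext e
  have he : exp3 (e 0) (e 1) (e 2) = e := by ext i; fin_cases i <;> simp
  rw [← he]
  exact h _ _ _

noncomputable def pathWeight (l : List Bool) : Fin 3 →₀ ℕ :=
  exp3 (peaks l) (flaws l) (l.count true)

def dyckPaths : Set (List Bool) := {l | height l = 0}

def nonnegDyckPaths : Set (List Bool) := {l | height l = 0 ∧ StaysNonneg l}

def nonposDyckPaths : Set (List Bool) := {l | height l = 0 ∧ StaysNonpos l}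

@[simp] theorem mem_dyckPaths {l : List Bool} : l ∈ dyckPaths ↔ height l = 0 := Iff.rfl

@[simp] theorem mem_nonnegDyckPaths {l : List Bool} :
    l ∈ nonnegDyckPaths ↔ height l = 0 ∧ StaysNonneg l := Iff.rfl

@[simp] theorem mem_nonposDyckPaths {l : List Bool} :
    l ∈ nonposDyckPaths ↔ height l = 0 ∧ StaysNonpos l := Iff.rfl

noncomputable def pathGF (s : Set (List Bool)) : MvPowerSeries (Fin 3) ℤ :=
  genFun fun l : s => pathWeight l

theorem finiteFibers_of_length_le {s : Set (List Bool)} {wt : s → Fin 3 →₀ ℕ}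
    (h : ∀ l : s, (l : List Bool).length ≤ 2 * wt l 2) : FiniteFibers wt := fun e =>
  have := (List.finite_length_le Bool (2 * e 2)).to_subtype
  Finite.of_injective (fun x : {l // wt l = e} =>
      (⟨x.1, (h x.1).trans_eq (by rw [x.2])⟩ : {l : List Bool | l.length ≤ 2 * e 2}))
    fun _ _ hxy => Subtype.ext (Subtype.ext (Subtype.mk.inj hxy))

theorem finiteFibers_pathWeight {s : Set (List Bool)} (hs : s ⊆ dyckPaths) :
    FiniteFibers fun l : s => pathWeight l :=
  finiteFibers_of_length_le fun l => by simp [pathWeight, length_eq_two_mul_count (hs l.2)]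

theorem coeff3_pathGF (s : Set (List Bool)) (k m n : ℕ) :
    coeff3 (pathGF s) k m n =
      Nat.card {l // l ∈ s ∧ peaks l = k ∧ flaws l = m ∧ l.count true = n} :=
  congrArg _ <| Nat.card_congr <|
    (Equiv.subtypeSubtypeEquivSubtypeInter (· ∈ s) (fun l => pathWeight l = exp3 k m n)).trans
      (Equiv.subtypeEquivRight fun _ => by rw [pathWeight, exp3_eq_exp3_iff])

theorem coeff3_pathGF_dyckPaths (k m n : ℕ) : coeff3 (pathGF dyckPaths) k m n = p n m k := by
  rw [coeff3_pathGF, p]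
  exact congrArg _ <| Nat.card_congr <| Equiv.subtypeEquivRight fun l => by
    rw [isDyck_iff, mem_dyckPaths]
    tauto

theorem coeff3_pathGF_nonnegDyckPaths (k m n : ℕ) :
    coeff3 (pathGF nonnegDyckPaths) k m n = if m = 0 then (p n 0 k : ℤ) else 0 := by
  rw [coeff3_pathGF]
  split_ifs with hm
  · subst hm
    rw [p]
    refine congrArg _ <| Nat.card_congr <| Equiv.subtypeEquivRight fun l => ?_
    rw [isDyck_iff, mem_nonnegDyckPaths]
    exact ⟨fun ⟨⟨h0, _⟩, hk, hf, hn⟩ => ⟨⟨h0, hn⟩, hf, hk⟩,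
      fun ⟨⟨h0, hn⟩, hf, hk⟩ =>
        ⟨⟨h0, staysNonneg_of_flaws_eq_zero h0 hf⟩, hk, hf, hn⟩⟩
  · rw [Nat.cast_eq_zero, Nat.card_eq_zero]
    exact Or.inl ⟨fun ⟨_, hl, _, hf, _⟩ => hm (hf ▸ flaws_eq_zero_of_staysNonneg hl.2)⟩

/-- Reflection `l ↦ l.map not` turns nonpositive paths into nonnegative ones and peaks into
valleys; on a nonpositive path every up step is a flaw. -/
theorem coeff3_pathGF_nonposDyckPaths (k m n : ℕ) :
    coeff3 (pathGF nonposDyckPaths) k m n = if m = n then (v n 0 k : ℤ) else 0 := by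
  rw [coeff3_pathGF]
  split_ifs with hm
  · subst hm
    rw [v]
    refine congrArg _ <| Nat.card_congr <| Equiv.subtypeEquiv
      (Function.Involutive.toPerm (List.map not) fun l => by simp [Function.comp_def]) fun l => ?_
    change _ ↔ IsDyck m (l.map not) ∧ flaws (l.map not) = 0 ∧ valleys (l.map not) = k
    simp only [isDyck_iff, height_map_not, neg_eq_zero,
      valleys_map_not, count_true_map_not, mem_nonposDyckPaths]
    constructor
    · rintro ⟨⟨h0, hl⟩, hk, -, hn⟩
      exact ⟨⟨h0, count_false_eq_count_true h0 ▸ hn⟩,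
        flaws_eq_zero_of_staysNonneg (staysNonneg_map_not.2 hl), hk⟩
    · rintro ⟨⟨h0, hn⟩, hf, hk⟩
      have hl := staysNonneg_map_not.1
        (staysNonneg_of_flaws_eq_zero (by rw [height_map_not, h0, neg_zero]) hf)
      rw [count_false_eq_count_true h0] at hn
      exact ⟨⟨h0, hl⟩, hk, (flaws_eq_count_of_staysNonpos hl).trans hn, hn⟩
  · rw [Nat.cast_eq_zero, Nat.card_eq_zero]
    exact Or.inl
      ⟨fun ⟨_, hl, _, hf, hn⟩ => hm (hf ▸ hn ▸ flaws_eq_count_of_staysNonpos hl.2)⟩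

theorem pathWeight_append {l₁ l₂ : List Bool} (h : height l₁ = 0)
    (hj : ¬(l₁.getLast? = some true ∧ l₂.head? = some false)) :
    pathWeight (l₁ ++ l₂) = pathWeight l₁ + pathWeight l₂ := by
  simp [pathWeight, peaks_append, hj, flaws_append h, exp3_add]

noncomputable def archWeight (a : List Bool) : Fin 3 →₀ ℕ :=
  pathWeight (true :: (a ++ [false]))

theorem pathWeight_join {w a r : List Bool} (hw : height w = 0) (ha : height a = 0) :
    pathWeight (w ++ true :: (a ++ false :: r)) = pathWeight w + (archWeight a + pathWeight r) := by
  rw [show w ++ true :: (a ++ false :: r) = w ++ (true :: (a ++ [false]) ++ r) by simp,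
    pathWeight_append hw (by simp), pathWeight_append (by simp [ha]) (by simp [List.getLast?_cons]),
    archWeight]

theorem StaysNonneg.head?_eq {a : List Bool} (ha : StaysNonneg a) (hne : a ≠ []) :
    a.head? = some true := by
  obtain ⟨b, t, rfl⟩ := List.exists_cons_of_ne_nil hne
  have := ha 1
  cases b <;> simp_all

theorem StaysNonneg.getLast?_eq {a : List Bool} (ha : StaysNonneg a) (h0 : height a = 0)
    (hne : a ≠ []) : a.getLast? = some false := by
  obtain ⟨t, b, rfl⟩ := (List.eq_nil_or_concat a).resolve_left hne
  rw [List.concat_eq_append] at ha h0 ⊢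
  have ht : 0 ≤ height t := by simpa using ha t.length
  cases b
  · simp
  · rw [height_append, height_cons_true, height_nil] at h0
    omega

theorem StaysNonneg.arch {a : List Bool} (ha : StaysNonneg a) (h0 : height a = 0) :
    StaysNonneg (true :: (a ++ [false])) := by
  rintro (_ | i)
  · simp
  · by_cases hi : i ≤ a.length
    · have := ha i
      rw [List.take_succ_cons, List.take_append, Nat.sub_eq_zero_of_le hi, List.take_zero,
        List.append_nil, height_cons_true]
      omega
    · obtain ⟨j, rfl⟩ := Nat.exists_eq_add_of_lt (not_le.1 hi)
      simp [List.take_of_length_le, h0]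

theorem archWeight_eq {a : List Bool} (ha : a ∈ nonnegDyckPaths) :
    archWeight a = exp3 0 0 1 + if a = [] then exp3 1 0 0 else pathWeight a := by
  obtain ⟨h0, hnn⟩ := ha
  split_ifs with hne
  · subst hne
    rw [archWeight, pathWeight, exp3_add]
    rfl
  · have hpeaks : peaks (true :: (a ++ [false])) = peaks a := by
      rw [peaks_cons, peaks_append, List.head?_append, hnn.head?_eq hne, hnn.getLast?_eq h0 hne]
      simp [peaks]
    rw [archWeight, pathWeight, pathWeight, exp3_add, hpeaks, flaws_eq_zero_of_staysNonneg hnn,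
      flaws_eq_zero_of_staysNonneg (hnn.arch h0)]
    simp [add_comm]

noncomputable def archGF : MvPowerSeries (Fin 3) ℤ :=
  genFun fun a : nonnegDyckPaths => archWeight a

theorem archGF_eq : archGF = X 2 * (X 0 + pathGF nonnegDyckPaths - 1) := by
  let f : nonnegDyckPaths → Fin 3 →₀ ℕ := fun a =>
    if a.1 = [] then exp3 1 0 0 else pathWeight a
  have hf : FiniteFibers f := finiteFibers_of_length_le fun a => by
    by_cases ha : a.1 = [] <;> simp [f, ha, pathWeight, length_eq_two_mul_count a.2.1]
  have hpath := finiteFibers_pathWeight (s := nonnegDyckPaths) fun _ h => h.1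
  let nil : nonnegDyckPaths := ⟨[], rfl, fun _ => by simp⟩
  have hf_ne : (fun a : {a // a ≠ nil} => f a) = fun a => pathWeight a.1.1 :=
    funext fun a => if_neg fun h => a.2 (Subtype.ext h)
  have hsingle (i : Fin 3) (k m n : ℕ) (h : exp3 k m n = Finsupp.single i 1) :
      monomial (exp3 k m n) (1 : ℤ) = X i := by rw [h, X_def]
  have hgf : (genFun f : MvPowerSeries (Fin 3) ℤ) =
      genFun (fun a : {a // a ≠ nil} => pathWeight a.1.1) + X 0 := by
    rw [genFun_eq_genFun_ne_add hf nil, hf_ne]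
    exact congrArg _ (hsingle 0 1 0 0 (by ext i; fin_cases i <;> simp))
  have hP0 :
      pathGF nonnegDyckPaths = genFun (fun a : {a // a ≠ nil} => pathWeight a.1.1) + 1 := by
    have hnil : pathWeight nil = 0 := by simp [nil, pathWeight, exp3, peaks, flaws]
    rw [pathGF, genFun_eq_genFun_ne_add hpath nil, hnil, monomial_zero_one]
  have harch : archGF = monomial (exp3 0 0 1) 1 * genFun f := by
    rw [archGF, ← genFun_const_add hf]
    exact congrArg genFun (funext fun a => archWeight_eq a.2)
  rw [harch, hgf, hP0, hsingle 2 0 0 1 (by ext i; fin_cases i <;> simp)]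
  ring

theorem not_staysNonpos_append_cons_true {w : List Bool} (hw : height w = 0) (s : List Bool) :
    ¬StaysNonpos (w ++ true :: s) := fun h => by
  simpa [List.take_append, List.take_of_length_le, hw] using h (w.length + 1)

theorem exists_eq_join {l : List Bool} (hl : height l = 0) (hnp : ¬StaysNonpos l) :
    ∃ w a r, l = w ++ true :: (a ++ false :: r) ∧
      w ∈ nonposDyckPaths ∧ a ∈ nonnegDyckPaths ∧ r ∈ dyckPaths := by
  obtain ⟨w, s, rfl, hw, hwp⟩ := exists_first_ascent hnp
  have hs : height s = -1 := by
    rw [height_append, height_cons_true, hw] at hl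
    omega
  obtain ⟨a, r, rfl, ha, han⟩ :=
    exists_first_descent (l := s) fun h => by simpa [hs] using h s.length
  exact ⟨w, a, r, rfl, ⟨hw, hwp⟩, ⟨ha, han⟩, by simpa [hw, ha] using hl⟩

theorem eq_of_join_eq {w a r w' a' r' : List Bool}
    (hw : w ∈ nonposDyckPaths) (hw' : w' ∈ nonposDyckPaths)
    (ha : a ∈ nonnegDyckPaths) (ha' : a' ∈ nonnegDyckPaths)
    (h : w ++ true :: (a ++ false :: r) = w' ++ true :: (a' ++ false :: r')) :
    w = w' ∧ a = a' ∧ r = r' := by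
  obtain ⟨rfl, htail⟩ := List.eq_of_append_cons_eq_of_minimal (Q := fun u => 0 < height u)
    (by simp [hw.1]) (by simp [hw'.1]) (fun i => not_lt.2 (hw.2 i)) (fun i => not_lt.2 (hw'.2 i)) h
  obtain ⟨rfl, rfl⟩ := List.eq_of_append_cons_eq_of_minimal (Q := fun u => height u < 0)
    (by simp [ha.1]) (by simp [ha'.1]) (fun i => not_lt.2 (ha.2 i)) (fun i => not_lt.2 (ha'.2 i))
    htail
  exact ⟨rfl, rfl, rfl⟩

def joinPaths :
    nonposDyckPaths ⊕ nonposDyckPaths × (nonnegDyckPaths × dyckPaths) → dyckPaths :=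
  Sum.elim (fun w => ⟨w, w.2.1⟩) fun x =>
    ⟨x.1 ++ true :: (x.2.1 ++ false :: x.2.2),
      by simp [x.1.2.1, x.2.1.2.1, mem_dyckPaths.1 x.2.2.2]⟩

theorem joinPaths_bijective : Function.Bijective joinPaths := by
  refine ⟨Function.Injective.sumElim ?_ ?_ ?_, ?_⟩
  · exact fun w w' h => Subtype.ext (Subtype.mk.inj h :)
  · rintro ⟨w, a, r⟩ ⟨w', a', r'⟩ h
    obtain ⟨hw, ha, hr⟩ := eq_of_join_eq w.2 w'.2 a.2 a'.2 (Subtype.mk.inj h)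
    simp only [Prod.mk.injEq, Subtype.ext_iff]
    exact ⟨hw, ha, hr⟩
  · rintro w ⟨w', a, r⟩ h
    exact not_staysNonpos_append_cons_true w'.2.1 _ (Subtype.mk.inj h ▸ w.2.2)
  · rintro ⟨l, hl⟩
    by_cases hnp : StaysNonpos l
    · exact ⟨.inl ⟨l, hl, hnp⟩, rfl⟩
    · obtain ⟨w, a, r, rfl, hw, ha, hr⟩ := exists_eq_join hl hnp
      exact ⟨.inr (⟨w, hw⟩, ⟨a, ha⟩, ⟨r, hr⟩), rfl⟩

theorem pathGF_dyckPaths_eq : pathGF dyckPaths =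
    pathGF nonposDyckPaths + pathGF nonposDyckPaths * (archGF * pathGF dyckPaths) := by
  have hdyck := finiteFibers_pathWeight (s := dyckPaths) subset_rfl
  have hnonpos := finiteFibers_pathWeight (s := nonposDyckPaths) fun _ h => h.1
  have harch : FiniteFibers fun a : nonnegDyckPaths => archWeight a :=
    finiteFibers_of_length_le fun a => by
      simp [archWeight, pathWeight, length_eq_two_mul_count a.2.1]
  have hweight : (fun l : dyckPaths => pathWeight l) ∘ Equiv.ofBijective _ joinPaths_bijective =
      Sum.elim (fun w : nonposDyckPaths => pathWeight w)
        fun x => pathWeight x.1 + (archWeight x.2.1 + pathWeight x.2.2) := by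
    funext x
    rcases x with w | ⟨w, a, r⟩
    · rfl
    · exact pathWeight_join w.2.1 a.2.1
  refine (genFun_comp_equiv (Equiv.ofBijective _ joinPaths_bijective) _).symm.trans ?_
  rw [hweight, genFun_sum hnonpos (hnonpos.prod (harch.prod hdyck)),
    genFun_prod hnonpos (harch.prod hdyck),
    genFun_prod harch hdyck]
  rfl

/-- `P(x,y,z) = V_0(x,yz) (1 + z (x + P_0(x,z) - 1) P(x,y,z))`, where `P` is the
three-variable generating function of `p_{n,m,k}`, `P0` represents `P_0(x,z)` and
`W` represents `V_0(x,yz)`. -/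
theorem peak_master_series (P P0 W : MvPowerSeries (Fin 3) ℤ)
    (hP : ∀ n m k : ℕ, coeff3 P k m n = p n m k)
    (hP0 : ∀ n m k : ℕ, coeff3 P0 k m n = if m = 0 then (p n 0 k : ℤ) else 0)
    (hW : ∀ n m k : ℕ, coeff3 W k m n = if m = n then (v n 0 k : ℤ) else 0) :
    P = W * (1 + MvPowerSeries.X 2 * (MvPowerSeries.X 0 + P0 - 1) * P) := by
  obtain rfl : P = pathGF dyckPaths :=
    ext_coeff3 fun k m n => by rw [hP, coeff3_pathGF_dyckPaths]
  obtain rfl : P0 = pathGF nonnegDyckPaths :=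
    ext_coeff3 fun k m n => by rw [hP0, coeff3_pathGF_nonnegDyckPaths]
  obtain rfl : W = pathGF nonposDyckPaths :=
    ext_coeff3 fun k m n => by rw [hW, coeff3_pathGF_nonposDyckPaths]
  linear_combination pathGF_dyckPaths_eq + pathGF nonposDyckPaths * pathGF dyckPaths * archGF_eq
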